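/- arXiv:math/0508524 — 5 statements merged into one kernel-verified Lean document; each statement's English description precedes it below -/
import Mathlib

section
/- Let u : [0, ∞) → ℝ be a lower semicontinuous function with lim_{x → +∞} u(x)/x = +∞, and define u*(x) = sup_{y ≥ 0} (x y − u(y)). Then for every x > 0 one has sup_{y ≥ 0} (x y − u(e^y)) + sup_{y ≥ 0} (x y − u*(e^y)) ≤ x ln x − x. -/
open Real Set Filter

/-- A function lower semicontinuous on `Ici 0` is bounded below on every `Icc 0 M`. -/
lemma lsc_bddBelow_on_Icc (u : ℝ → ℝ) (hlsc : LowerSemicontinuousOn u (Ici (0 : ℝ)))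
    (M : ℝ) : ∃ m : ℝ, ∀ t ∈ Icc (0 : ℝ) M, m ≤ u t := by
  classical
  have hK : IsCompact (Icc (0 : ℝ) M) := isCompact_Icc
  -- for each point, choose an open neighbourhood where u > u t - 1
  have hU : ∀ t ∈ Icc (0 : ℝ) M, ∃ U : Set ℝ, IsOpen U ∧ t ∈ U ∧
      ∀ s ∈ U ∩ Ici (0 : ℝ), u t - 1 < u s := by
    intro t ht
    have h := hlsc t (ht.1) (u t - 1) (by linarith)
    rw [eventually_nhdsWithin_iff] at h
    rcases eventually_nhds_iff.1 h with ⟨U, hU1, hU2, hU3⟩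
    exact ⟨U, hU2, hU3, fun s hs => hU1 s hs.1 hs.2⟩
  choose! U hUo hUt hUb using hU
  obtain ⟨F, hFmem, hFcov⟩ := hK.elim_nhds_subcover U
    (fun t ht => (hUo t ht).mem_nhds (hUt t ht))
  by_cases hF : F.Nonempty
  · refine ⟨(F.image fun t => u t - 1).min' (hF.image _), fun t ht => ?_⟩
    rcases mem_iUnion₂.1 (hFcov ht) with ⟨s, hsF, hts⟩
    have hs : s ∈ Icc (0 : ℝ) M := hFmem s hsF
    have := hUb s hs t ⟨hts, ht.1⟩
    have hmin : (F.image fun t => u t - 1).min' (hF.image _) ≤ u s - 1 :=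
      Finset.min'_le _ _ (Finset.mem_image.2 ⟨s, hsF, rfl⟩)
    linarith
  · refine ⟨0, fun t ht => absurd (hFcov ht) ?_⟩
    simp [Finset.not_nonempty_iff_eq_empty.1 hF]

/-- For a function `u` on `[0, ∞)`, lower semicontinuous with superlinear growth,
the Young conjugates of `x ↦ u (e^x)` and `x ↦ u* (e^x)` satisfy
`(u(e))*(x) + (u*(e))*(x) ≤ x ln x - x` for all `x > 0`, where
`u*(x) = sup_{y ≥ 0} (x y - u y)`. -/
theorem young_conjugate_exp_ineq (u : ℝ → ℝ)
    (hlsc : LowerSemicontinuousOn u (Ici (0 : ℝ)))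
    (hgrow : Tendsto (fun x => u x / x) atTop atTop) :
    ∀ x : ℝ, 0 < x →
      sSup {z : ℝ | ∃ y : ℝ, 0 ≤ y ∧ z = x * y - u (Real.exp y)} +
        sSup {z : ℝ | ∃ y : ℝ, 0 ≤ y ∧
          z = x * y - sSup {w : ℝ | ∃ t : ℝ, 0 ≤ t ∧ w = Real.exp y * t - u t}} ≤
      x * Real.log x - x := by
  -- boundedness of the conjugate defining sets
  have hbdd : ∀ c : ℝ, BddAbove {w : ℝ | ∃ t : ℝ, 0 ≤ t ∧ w = c * t - u t} := by
    intro c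
    obtain ⟨M, hM⟩ := eventually_atTop.1 (hgrow.eventually_ge_atTop (c + 1))
    set M' : ℝ := max M 1 with hM'
    obtain ⟨m, hm⟩ := lsc_bddBelow_on_Icc u hlsc M'
    refine ⟨max (|c| * M' - m) 0, ?_⟩
    rintro w ⟨t, ht0, rfl⟩
    by_cases htM : t ≤ M'
    · have h1 : c * t ≤ |c| * M' := by
        calc c * t ≤ |c| * t := mul_le_mul_of_nonneg_right (le_abs_self c) ht0
        _ ≤ |c| * M' := mul_le_mul_of_nonneg_left htM (abs_nonneg c)
      have h2 := hm t ⟨ht0, htM⟩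
      exact le_max_of_le_left (by linarith)
    · push_neg at htM
      have ht1 : (1 : ℝ) ≤ t := le_trans (le_max_right M 1) htM.le
      have htpos : 0 < t := lt_of_lt_of_le one_pos ht1
      have := hM t (le_trans (le_max_left M 1) htM.le)
      have hut : (c + 1) * t ≤ u t := by
        rw [le_div_iff₀ htpos] at this
        linarith
      have : c * t - u t ≤ -t := by nlinarith
      exact le_max_of_le_right (by linarith)
  intro x hx
  -- key elementary inequality : x * s - exp s ≤ x * log x - x
  have key : ∀ s : ℝ, x * s - Real.exp s ≤ x * Real.log x - x := by
    intro s
    have h := Real.add_one_le_exp (s - Real.log x)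
    have h2 : Real.exp (s - Real.log x) = Real.exp s / x := by
      rw [Real.exp_sub, Real.exp_log hx]
    rw [h2] at h
    have h3 : x * (s - Real.log x + 1) ≤ x * (Real.exp s / x) :=
      mul_le_mul_of_nonneg_left h hx.le
    rw [mul_div_cancel₀ _ hx.ne'] at h3
    linarith [mul_add x (s - Real.log x) 1, mul_sub x s (Real.log x)]
  have hSA : {z : ℝ | ∃ y : ℝ, 0 ≤ y ∧ z = x * y - u (Real.exp y)}.Nonempty :=
    ⟨x * 0 - u (Real.exp 0), 0, le_refl 0, rfl⟩
  have hSB : {z : ℝ | ∃ y : ℝ, 0 ≤ y ∧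
      z = x * y - sSup {w : ℝ | ∃ t : ℝ, 0 ≤ t ∧ w = Real.exp y * t - u t}}.Nonempty :=
    ⟨_, 0, le_refl 0, rfl⟩
  have hmain : ∀ a ∈ {z : ℝ | ∃ y : ℝ, 0 ≤ y ∧ z = x * y - u (Real.exp y)},
      ∀ b ∈ {z : ℝ | ∃ y : ℝ, 0 ≤ y ∧
        z = x * y - sSup {w : ℝ | ∃ t : ℝ, 0 ≤ t ∧ w = Real.exp y * t - u t}},
      a + b ≤ x * Real.log x - x := by
    rintro a ⟨y1, hy1, rfl⟩ b ⟨y2, hy2, rfl⟩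
    have hle : Real.exp y2 * Real.exp y1 - u (Real.exp y1) ≤
        sSup {w : ℝ | ∃ t : ℝ, 0 ≤ t ∧ w = Real.exp y2 * t - u t} :=
      le_csSup (hbdd (Real.exp y2)) ⟨Real.exp y1, (Real.exp_pos y1).le, rfl⟩
    have hk := key (y1 + y2)
    rw [Real.exp_add] at hk
    nlinarith
  have h1 : sSup {z : ℝ | ∃ y : ℝ, 0 ≤ y ∧ z = x * y - u (Real.exp y)} ≤
      (x * Real.log x - x) - sSup {z : ℝ | ∃ y : ℝ, 0 ≤ y ∧
        z = x * y - sSup {w : ℝ | ∃ t : ℝ, 0 ≤ t ∧ w = Real.exp y * t - u t}} := by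
    refine csSup_le hSA (fun a ha => ?_)
    have h2 : sSup {z : ℝ | ∃ y : ℝ, 0 ≤ y ∧
        z = x * y - sSup {w : ℝ | ∃ t : ℝ, 0 ≤ t ∧ w = Real.exp y * t - u t}} ≤
        (x * Real.log x - x) - a := by
      refine csSup_le hSB (fun b hb => ?_)
      linarith [hmain a ha b hb]
    linarith
  linarith
end

section
/- Let n ≥ 1 and let (φ_m)_{m≥1} be continuous functions φ_m : ℝⁿ → ℝ such that for each m, φ_m(x) − φ_{m+1}(x) → +∞ as ‖x‖ → ∞. Let f : ℝⁿ → ℂ be a C^∞ function such that q_{φ_m,m}(f) < ∞ for every m ≥ 1. Let χ ∈ C^∞(ℝ) satisfy supp χ ⊆ [−2, 2], χ(x) = 1 for x ∈ [−1, 1], and 0 ≤ χ ≤ 1, and set η(x₁, …, xₙ) = χ(x₁)⋯χ(xₙ) and f_ν(x) = f(x) η(x/ν) for ν ∈ ℕ. Then for every m ≥ 1, q_{φ_m,m}(f_ν − f) → 0 as ν → ∞. -/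
open Real Set Filter

/-- The weighted seminorm `q_{φ,m}(g) = sup_{x, |α| ≤ m} |D^α g(x)| e^{-φ(x)}`, where the
supremum over multi-indices `α` of order `k ≤ m` is expressed as a supremum over tuples
of coordinate directions (valued in `ℝ≥0∞` so that it is always defined). -/
noncomputable def weightedSeminorm (n : ℕ) (φ : EuclideanSpace ℝ (Fin n) → ℝ) (m : ℕ)
    (g : EuclideanSpace ℝ (Fin n) → ℂ) : ENNReal :=
  ⨆ (k : ℕ) (_ : k ≤ m) (d : Fin k → Fin n) (x : EuclideanSpace ℝ (Fin n)),
    (‖iteratedFDeriv ℝ k g x (fun i => EuclideanSpace.single (d i) (1 : ℝ))‖₊ : ENNReal) *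
      ENNReal.ofReal (Real.exp (-(φ x)))

lemma euclid_abs_coord_le {n : ℕ} (x : EuclideanSpace ℝ (Fin n)) (i : Fin n) :
    |x i| ≤ ‖x‖ := by
  rw [EuclideanSpace.norm_eq, ← Real.sqrt_sq_eq_abs]
  simp_rw [Real.norm_eq_abs, sq_abs]
  exact Real.sqrt_le_sqrt
    (Finset.single_le_sum (f := fun j => x j ^ 2) (fun j _ => sq_nonneg _) (Finset.mem_univ i))

lemma euclid_eq_sum_single {n : ℕ} (x : EuclideanSpace ℝ (Fin n)) :
    x = ∑ j : Fin n, x j • EuclideanSpace.single j (1 : ℝ) := by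
  ext i
  rw [show (∑ j : Fin n, x j • EuclideanSpace.single j (1 : ℝ)) i
      = ∑ j : Fin n, (x j • EuclideanSpace.single j (1 : ℝ)) i from
    by rw [WithLp.ofLp_sum]; exact Finset.sum_apply i Finset.univ _]
  simp [EuclideanSpace.single_apply, PiLp.smul_apply]

lemma multilinear_norm_le_sum {n k : ℕ}
    (T : ContinuousMultilinearMap ℝ (fun _ : Fin k => EuclideanSpace ℝ (Fin n)) ℂ) :
    ‖T‖ ≤ ∑ d : Fin k → Fin n, ‖T (fun i => EuclideanSpace.single (d i) (1 : ℝ))‖ := by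
  apply T.opNorm_le_bound (Finset.sum_nonneg fun _ _ => norm_nonneg _)
  intro v
  have h1 : T v = ∑ d : Fin k → Fin n,
      (∏ i, v i (d i)) • T (fun i => EuclideanSpace.single (d i) (1 : ℝ)) := by
    have h2 : T v = T fun i => ∑ j : Fin n, v i j • EuclideanSpace.single j (1 : ℝ) := by
      congr 1; funext i; exact euclid_eq_sum_single (v i)
    rw [h2]
    have h3 := T.toMultilinearMap.map_sum
      (g := fun (i : Fin k) (j : Fin n) => v i j • EuclideanSpace.single j (1 : ℝ))
    simp only [ContinuousMultilinearMap.coe_coe] at h3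
    rw [h3]
    refine Finset.sum_congr rfl fun d _ => ?_
    have := T.toMultilinearMap.map_smul_univ (fun i => v i (d i))
      (fun i => EuclideanSpace.single (d i) (1 : ℝ))
    simpa using this
  rw [h1]
  calc ‖∑ d : Fin k → Fin n,
      (∏ i, v i (d i)) • T (fun i => EuclideanSpace.single (d i) (1 : ℝ))‖
      ≤ ∑ d : Fin k → Fin n,
        ‖(∏ i, v i (d i)) • T (fun i => EuclideanSpace.single (d i) (1 : ℝ))‖ :=
      norm_sum_le _ _
    _ ≤ ∑ d : Fin k → Fin n,
        ‖T (fun i => EuclideanSpace.single (d i) (1 : ℝ))‖ * ∏ i, ‖v i‖ := by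
      refine Finset.sum_le_sum fun d _ => ?_
      rw [norm_smul, mul_comm]
      refine mul_le_mul_of_nonneg_left ?_ (norm_nonneg _)
      calc ‖∏ i, v i (d i)‖ = ∏ i, |v i (d i)| := by
            rw [Real.norm_eq_abs, Finset.abs_prod]
        _ ≤ ∏ i, ‖v i‖ :=
            Finset.prod_le_prod (fun _ _ => abs_nonneg _)
              (fun i _ => euclid_abs_coord_le _ _)
    _ = (∑ d : Fin k → Fin n, ‖T (fun i => EuclideanSpace.single (d i) (1 : ℝ))‖) *
        ∏ i, ‖v i‖ := by rw [Finset.sum_mul]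

lemma iteratedFDeriv_of_eventually_zero {E F : Type*} [NormedAddCommGroup E]
    [NormedSpace ℝ E] [NormedAddCommGroup F] [NormedSpace ℝ F]
    {f : E → F} {x : E} (h : ∀ᶠ y in nhds x, f y = 0) (k : ℕ) :
    iteratedFDeriv ℝ k f x = 0 := by
  rw [← iteratedFDerivWithin_univ]
  have h' : f =ᶠ[nhdsWithin x univ] (fun _ => (0 : F)) := by
    rw [nhdsWithin_univ]; exact h
  rw [h'.iteratedFDerivWithin_eq h.self_of_nhds k, iteratedFDerivWithin_univ]
  exact congrFun iteratedFDeriv_zero_fun x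

set_option maxHeartbeats 1600000 in
/-- If `φ_m` are continuous with `φ_m(x) - φ_{m+1}(x) → ∞` as `‖x‖ → ∞`, `f` is smooth with
`q_{φ_m,m}(f) < ∞` for every `m ≥ 1`, `χ` is a smooth cutoff with support in `[-2,2]`,
equal to `1` on `[-1,1]` and `0 ≤ χ ≤ 1`, `η(x) = χ(x₁)⋯χ(xₙ)` and `f_ν(x) = f(x) η(x/ν)`,
then `q_{φ_m,m}(f_ν - f) → 0` as `ν → ∞`, for every `m ≥ 1`. -/
theorem cutoff_approximation_weighted_space (n : ℕ) (hn : 1 ≤ n)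
    (φ : ℕ → EuclideanSpace ℝ (Fin n) → ℝ)
    (hcont : ∀ m, 1 ≤ m → Continuous (φ m))
    (hdiff : ∀ m, 1 ≤ m →
      Tendsto (fun x => φ m x - φ (m + 1) x) (cocompact (EuclideanSpace ℝ (Fin n))) atTop)
    (f : EuclideanSpace ℝ (Fin n) → ℂ) (hf : ContDiff ℝ (⊤ : ℕ∞) f)
    (hfq : ∀ m, 1 ≤ m → weightedSeminorm n (φ m) m f < ⊤)
    (χ : ℝ → ℝ) (hχsmooth : ContDiff ℝ (⊤ : ℕ∞) χ)
    (hχsupp : Function.support χ ⊆ Set.Icc (-2 : ℝ) 2)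
    (hχone : ∀ x ∈ Set.Icc (-1 : ℝ) 1, χ x = 1)
    (hχbdd : ∀ x : ℝ, 0 ≤ χ x ∧ χ x ≤ 1)
    (fν : ℕ → EuclideanSpace ℝ (Fin n) → ℂ)
    (hfν : ∀ (ν : ℕ), 1 ≤ ν → ∀ x,
      fν ν x = f x * ((∏ i : Fin n, χ (x i / (ν : ℝ)) : ℝ) : ℂ)) :
    ∀ m, 1 ≤ m →
      Tendsto (fun ν : ℕ => weightedSeminorm n (φ m) m (fun x => fν ν x - f x))
        atTop (nhds 0) := by
  intro m hm
  have hn' : (1 : ℝ) ≤ n := by exact_mod_cast hn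
  -- the complex-valued cutoff product
  set Pc : EuclideanSpace ℝ (Fin n) → ℂ := fun y => ∏ i : Fin n, (χ (y i) : ℂ) with hPc_def
  have hPc_real : ∀ y, Pc y = ((∏ i : Fin n, χ (y i) : ℝ) : ℂ) := by
    intro y; rw [hPc_def]; push_cast; rfl
  have hPc_smooth : ContDiff ℝ (⊤ : ℕ∞) Pc :=
    contDiff_prod fun i _ =>
      Complex.ofRealCLM.contDiff.comp (hχsmooth.comp (EuclideanSpace.proj (𝕜 := ℝ) i).contDiff)
  have hPc_cs : HasCompactSupport Pc := by
    apply HasCompactSupport.intro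
      (isCompact_closedBall (0 : EuclideanSpace ℝ (Fin n)) (Real.sqrt (4 * n)))
    intro y hy
    by_contra h0
    apply hy
    rw [Metric.mem_closedBall, dist_zero_right, EuclideanSpace.norm_eq]
    simp_rw [Real.norm_eq_abs, sq_abs]
    have hcoord : ∀ i, |y i| ≤ 2 := by
      intro i
      have hχne : χ (y i) ≠ 0 := by
        intro hz
        exact h0 (Finset.prod_eq_zero (Finset.mem_univ i) (by rw [hz]; norm_num))
      have hmem := hχsupp (Function.mem_support.mpr hχne)
      exact abs_le.mpr ⟨hmem.1, hmem.2⟩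
    calc Real.sqrt (∑ i, y i ^ 2) ≤ Real.sqrt (∑ _i : Fin n, (2 : ℝ) ^ 2) := by
          apply Real.sqrt_le_sqrt
          refine Finset.sum_le_sum fun i _ => ?_
          rw [← sq_abs]
          exact pow_le_pow_left₀ (abs_nonneg _) (hcoord i) 2
      _ = Real.sqrt (4 * n) := by
          rw [Finset.sum_const, Finset.card_univ, Fintype.card_fin, nsmul_eq_mul]
          norm_num [mul_comm]
  -- uniform bounds on the derivatives of Pc
  obtain ⟨M, hM0, hM1, hM⟩ : ∃ M : ℝ, 0 ≤ M ∧ 1 ≤ M ∧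
      ∀ j, j ≤ m → ∀ y, ‖iteratedFDeriv ℝ j Pc y‖ ≤ M := by
    have key : ∀ j : ℕ, ∃ Mj : ℝ, ∀ y, ‖iteratedFDeriv ℝ j Pc y‖ ≤ Mj := fun j =>
      (hPc_smooth.continuous_iteratedFDeriv (by exact_mod_cast le_top)).bounded_above_of_compact_support
        (hPc_cs.iteratedFDeriv j)
    choose Mj hMj using key
    refine ⟨1 + ∑ j ∈ Finset.range (m + 1), max (Mj j) 0, by positivity, ?_, ?_⟩
    · have : (0 : ℝ) ≤ ∑ j ∈ Finset.range (m + 1), max (Mj j) 0 :=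
        Finset.sum_nonneg fun j _ => le_max_right _ _
      linarith
    · intro j hj y
      calc ‖iteratedFDeriv ℝ j Pc y‖ ≤ Mj j := hMj j y
        _ ≤ max (Mj j) 0 := le_max_left _ _
        _ ≤ ∑ j ∈ Finset.range (m + 1), max (Mj j) 0 :=
          Finset.single_le_sum (f := fun j => max (Mj j) 0)
            (fun j _ => le_max_right _ _) (Finset.mem_range.mpr (by omega))
        _ ≤ 1 + ∑ j ∈ Finset.range (m + 1), max (Mj j) 0 := by linarith
  -- bound on the derivatives of f coming from the finiteness of the seminorm
  set S := weightedSeminorm n (φ (m + 1)) (m + 1) f with hS_def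
  have hS : S ≠ ⊤ := (hfq (m + 1) (by omega)).ne
  set Q := S.toReal with hQ_def
  have hQ0 : 0 ≤ Q := ENNReal.toReal_nonneg
  have hfd : ∀ j, j ≤ m + 1 → ∀ x, ‖iteratedFDeriv ℝ j f x‖ ≤
      (n : ℝ) ^ j * (Q * Real.exp (φ (m + 1) x)) := by
    intro j hj x
    have hterm : ∀ d : Fin j → Fin n,
        ‖iteratedFDeriv ℝ j f x (fun i => EuclideanSpace.single (d i) (1 : ℝ))‖ ≤
          Q * Real.exp (φ (m + 1) x) := by
      intro d
      have h1 : (‖iteratedFDeriv ℝ j f x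
            (fun i => EuclideanSpace.single (d i) (1 : ℝ))‖₊ : ENNReal) *
          ENNReal.ofReal (Real.exp (-(φ (m + 1) x))) ≤ S := by
        rw [hS_def]
        unfold weightedSeminorm
        exact le_iSup_of_le j (le_iSup_of_le hj (le_iSup_of_le d (le_iSup_of_le x le_rfl)))
      have h2 : ‖iteratedFDeriv ℝ j f x (fun i => EuclideanSpace.single (d i) (1 : ℝ))‖ *
          Real.exp (-(φ (m + 1) x)) ≤ Q := by
        have h3 := (ENNReal.toReal_le_toReal
          (ENNReal.mul_ne_top ENNReal.coe_ne_top ENNReal.ofReal_ne_top) hS).mpr h1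
        simpa [ENNReal.toReal_mul, ENNReal.toReal_ofReal (Real.exp_nonneg _)] using h3
      rw [Real.exp_neg, ← div_eq_mul_inv, div_le_iff₀ (Real.exp_pos _)] at h2
      exact h2
    calc ‖iteratedFDeriv ℝ j f x‖
        ≤ ∑ d : Fin j → Fin n,
          ‖iteratedFDeriv ℝ j f x (fun i => EuclideanSpace.single (d i) (1 : ℝ))‖ :=
        multilinear_norm_le_sum _
      _ ≤ ∑ _d : Fin j → Fin n, Q * Real.exp (φ (m + 1) x) :=
        Finset.sum_le_sum fun d _ => hterm d
      _ = (n : ℝ) ^ j * (Q * Real.exp (φ (m + 1) x)) := by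
        rw [Finset.sum_const, Finset.card_univ, Fintype.card_fun, Fintype.card_fin,
          Fintype.card_fin, nsmul_eq_mul]
        push_cast
        ring
  -- the constant
  set C := (2 : ℝ) ^ m * ((n : ℝ) ^ m * (Q * M)) with hC_def
  have hC0 : 0 ≤ C := by positivity
  -- the key pointwise estimates
  have key : ∀ ν : ℕ, 1 ≤ ν → ∀ k, k ≤ m → ∀ x : EuclideanSpace ℝ (Fin n),
      (‖x‖ < ν → iteratedFDeriv ℝ k (fun y => fν ν y - f y) x = 0) ∧
      ‖iteratedFDeriv ℝ k (fun y => fν ν y - f y) x‖ ≤ C * Real.exp (φ (m + 1) x) := by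
    intro ν hν1 k hk x
    have hνpos : (0 : ℝ) < ν := by exact_mod_cast hν1
    set L : EuclideanSpace ℝ (Fin n) →L[ℝ] EuclideanSpace ℝ (Fin n) :=
      ((ν : ℝ)⁻¹) • ContinuousLinearMap.id ℝ _ with hL_def
    have hLnorm : ‖L‖ ≤ 1 := by
      rw [hL_def,
        norm_smul ((ν : ℝ)⁻¹) (ContinuousLinearMap.id ℝ (EuclideanSpace ℝ (Fin n))),
        Real.norm_eq_abs, abs_of_pos (by positivity)]
      calc (ν : ℝ)⁻¹ * ‖ContinuousLinearMap.id ℝ (EuclideanSpace ℝ (Fin n))‖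
          ≤ (ν : ℝ)⁻¹ * 1 :=
            mul_le_mul_of_nonneg_left ContinuousLinearMap.norm_id_le (by positivity)
        _ ≤ 1 := by
            rw [mul_one]
            exact inv_le_one_of_one_le₀ (by exact_mod_cast hν1)
    have hLapp : ∀ y : EuclideanSpace ℝ (Fin n), ∀ i, (L y) i = y i / ν := by
      intro y i
      rw [hL_def]
      simp [PiLp.smul_apply, smul_eq_mul, div_eq_inv_mul]
    have hg_eq : (fun y => fν ν y - f y) = fun y => f y * (Pc (L y) - 1) := by
      funext y
      rw [hfν ν hν1 y]
      have h4 : Pc (L y) = ((∏ i : Fin n, χ (y i / ν) : ℝ) : ℂ) := by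
        rw [hPc_real]
        norm_cast
        exact Finset.prod_congr rfl fun i _ => by rw [hLapp y i]
      rw [h4]; ring
    have hη_smooth : ContDiff ℝ (⊤ : ℕ∞) (fun y => Pc (L y) - 1) :=
      (hPc_smooth.comp L.contDiff).sub contDiff_const
    constructor
    · -- vanishing inside the ball
      intro hxν
      apply iteratedFDeriv_of_eventually_zero
      have hball : ∀ y ∈ Metric.ball (0 : EuclideanSpace ℝ (Fin n)) ν, fν ν y - f y = 0 := by
        intro y hy
        rw [Metric.mem_ball, dist_zero_right] at hy
        rw [hfν ν hν1 y]
        have hone : ∀ i : Fin n, χ (y i / ν) = 1 := by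
          intro i
          apply hχone
          rw [Set.mem_Icc, ← abs_le, abs_div, abs_of_pos hνpos]
          exact div_le_one_of_le₀ ((euclid_abs_coord_le y i).trans hy.le) hνpos.le
        rw [Finset.prod_congr rfl fun i _ => hone i]
        simp
      exact Filter.eventually_of_mem
        (Metric.isOpen_ball.mem_nhds (by rw [Metric.mem_ball, dist_zero_right]; exact hxν)) hball
    · -- the Leibniz bound
      rw [hg_eq]
      have hηd : ∀ j, j ≤ m → ‖iteratedFDeriv ℝ j (fun y => Pc (L y) - 1) x‖ ≤ M := by
        intro j hj
        rcases Nat.eq_zero_or_pos j with h0 | hpos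
        · subst h0
          rw [norm_iteratedFDeriv_zero]
          have hp0 : (0 : ℝ) ≤ ∏ i : Fin n, χ ((L x) i) :=
            Finset.prod_nonneg fun i _ => (hχbdd _).1
          have hp1 : (∏ i : Fin n, χ ((L x) i)) ≤ 1 :=
            Finset.prod_le_one (fun i _ => (hχbdd _).1) (fun i _ => (hχbdd _).2)
          have : Pc (L x) - 1 = (((∏ i : Fin n, χ ((L x) i)) - 1 : ℝ) : ℂ) := by
            rw [hPc_real]; push_cast; ring
          rw [this, Complex.norm_real, Real.norm_eq_abs]
          have : |(∏ i : Fin n, χ ((L x) i)) - 1| ≤ 1 :=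
            abs_le.mpr ⟨by linarith, by linarith⟩
          linarith
        · have heq : iteratedFDeriv ℝ j (Pc ∘ L) x
              = iteratedFDeriv ℝ j (fun y => Pc (L y) - 1) x := by
            have h1 : (Pc ∘ ⇑L) = (fun y => Pc (L y) - 1) + (fun _ => (1 : ℂ)) := by
              funext y; simp [Function.comp]
            rw [h1, iteratedFDeriv_add_apply (hη_smooth.of_le (by exact_mod_cast le_top)).contDiffAt contDiff_const.contDiffAt,
              iteratedFDeriv_const_of_ne hpos.ne']
            simp
          rw [← heq, L.iteratedFDeriv_comp_right hPc_smooth x (by exact_mod_cast le_top)]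
          calc ‖(iteratedFDeriv ℝ j Pc (L x)).compContinuousLinearMap fun _ => L‖
              ≤ ‖iteratedFDeriv ℝ j Pc (L x)‖ * ∏ _i : Fin j, ‖L‖ :=
              ContinuousMultilinearMap.norm_compContinuousLinearMap_le _ _
            _ ≤ M * 1 :=
              mul_le_mul (hM j hj _)
                (Finset.prod_le_one (fun _ _ => norm_nonneg _) (fun _ _ => hLnorm))
                (Finset.prod_nonneg fun _ _ => norm_nonneg _) hM0
            _ = M := mul_one M
      have hmul := norm_iteratedFDeriv_mul_le (𝕜 := ℝ) hf hη_smooth x (n := k) (by exact_mod_cast le_top)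
      refine hmul.trans ?_
      calc ∑ i ∈ Finset.range (k + 1), (k.choose i : ℝ) * ‖iteratedFDeriv ℝ i f x‖ *
            ‖iteratedFDeriv ℝ (k - i) (fun y => Pc (L y) - 1) x‖
          ≤ ∑ i ∈ Finset.range (k + 1),
            (k.choose i : ℝ) * ((n : ℝ) ^ m * (Q * Real.exp (φ (m + 1) x)) * M) := by
            refine Finset.sum_le_sum fun i hi => ?_
            rw [Finset.mem_range] at hi
            have him : i ≤ m := by omega
            have h1 : ‖iteratedFDeriv ℝ i f x‖ ≤
                (n : ℝ) ^ m * (Q * Real.exp (φ (m + 1) x)) := by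
              refine (hfd i (by omega) x).trans ?_
              exact mul_le_mul_of_nonneg_right (pow_le_pow_right₀ hn' him) (by positivity)
            have h2 : ‖iteratedFDeriv ℝ (k - i) (fun y => Pc (L y) - 1) x‖ ≤ M :=
              hηd (k - i) (by omega)
            have h3 : (k.choose i : ℝ) * ‖iteratedFDeriv ℝ i f x‖ *
                ‖iteratedFDeriv ℝ (k - i) (fun y => Pc (L y) - 1) x‖ ≤
                (k.choose i : ℝ) * ((n : ℝ) ^ m * (Q * Real.exp (φ (m + 1) x))) * M :=
              mul_le_mul (mul_le_mul_of_nonneg_left h1 (Nat.cast_nonneg _)) h2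
                (norm_nonneg _) (by positivity)
            exact h3.trans_eq (by ring)
        _ = (∑ i ∈ Finset.range (k + 1), (k.choose i : ℝ)) *
            ((n : ℝ) ^ m * (Q * Real.exp (φ (m + 1) x)) * M) := by rw [Finset.sum_mul]
        _ ≤ (2 : ℝ) ^ m * ((n : ℝ) ^ m * (Q * Real.exp (φ (m + 1) x)) * M) := by
            refine mul_le_mul_of_nonneg_right ?_ (by positivity)
            have hcs : (∑ i ∈ Finset.range (k + 1), (k.choose i : ℝ)) = (2 : ℝ) ^ k := by
              rw [← Nat.cast_sum, Nat.sum_range_choose]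
              push_cast; ring
            rw [hcs]
            exact pow_le_pow_right₀ one_le_two hk
        _ = C * Real.exp (φ (m + 1) x) := by rw [hC_def]; ring
  -- conclusion
  rw [ENNReal.tendsto_nhds_zero]
  intro ε hε
  set δ := min ε 1 with hδ_def
  have hδ0 : 0 < δ := lt_min hε zero_lt_one
  have hδtop : δ ≠ ⊤ := ne_top_of_le_ne_top (by simp) (min_le_right _ _)
  have hδt0 : 0 < δ.toReal := ENNReal.toReal_pos hδ0.ne' hδtop
  set Lc : ℝ := Real.log ((C + 1) / δ.toReal) with hLc_def
  have hCL : C * Real.exp (-Lc) ≤ δ.toReal := by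
    rw [Real.exp_neg, hLc_def, Real.exp_log (by positivity), inv_div]
    calc C * (δ.toReal / (C + 1)) ≤ (C + 1) * (δ.toReal / (C + 1)) := by
          exact mul_le_mul_of_nonneg_right (by linarith) (by positivity)
      _ = δ.toReal := by field_simp
  obtain ⟨K, hKc, hKs⟩ := Filter.mem_cocompact.mp ((hdiff m hm).eventually_ge_atTop Lc)
  obtain ⟨R, hR⟩ := hKc.isBounded.subset_closedBall 0
  filter_upwards [Filter.eventually_ge_atTop (max 1 (⌊R⌋₊ + 1))] with ν hν
  have hν1 : 1 ≤ ν := le_trans (le_max_left _ _) hν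
  have hνR : R < ν := by
    have h5 : ((⌊R⌋₊ + 1 : ℕ) : ℝ) ≤ ν := by
      exact_mod_cast le_trans (le_max_right _ _) hν
    calc R < ⌊R⌋₊ + 1 := Nat.lt_floor_add_one R
      _ ≤ (ν : ℝ) := by exact_mod_cast h5
  unfold weightedSeminorm
  refine iSup_le fun k => iSup_le fun hk => iSup_le fun d => iSup_le fun x => ?_
  by_cases hx : ‖x‖ < ν
  · rw [(key ν hν1 k hk x).1 hx]
    simp only [ContinuousMultilinearMap.zero_apply, nnnorm_zero, ENNReal.coe_zero, zero_mul]
    exact zero_le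
  · push_neg at hx
    have hxK : x ∉ K := by
      intro hxK
      have h6 := hR hxK
      rw [Metric.mem_closedBall, dist_zero_right] at h6
      have : (ν : ℝ) ≤ R := le_trans hx h6
      linarith
    have hgap : Lc ≤ φ m x - φ (m + 1) x := hKs hxK
    have happ : ‖iteratedFDeriv ℝ k (fun y => fν ν y - f y) x
        (fun i => EuclideanSpace.single (d i) (1 : ℝ))‖ ≤ C * Real.exp (φ (m + 1) x) := by
      calc ‖iteratedFDeriv ℝ k (fun y => fν ν y - f y) x
            (fun i => EuclideanSpace.single (d i) (1 : ℝ))‖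
          ≤ ‖iteratedFDeriv ℝ k (fun y => fν ν y - f y) x‖ *
            ∏ i : Fin k, ‖EuclideanSpace.single (d i) (1 : ℝ)‖ :=
          ContinuousMultilinearMap.le_opNorm _ _
        _ = ‖iteratedFDeriv ℝ k (fun y => fν ν y - f y) x‖ := by
            simp [EuclideanSpace.norm_single]
        _ ≤ C * Real.exp (φ (m + 1) x) := (key ν hν1 k hk x).2
    have hreal : ‖iteratedFDeriv ℝ k (fun y => fν ν y - f y) x
        (fun i => EuclideanSpace.single (d i) (1 : ℝ))‖ * Real.exp (-(φ m x)) ≤ δ.toReal := by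
      calc ‖iteratedFDeriv ℝ k (fun y => fν ν y - f y) x
            (fun i => EuclideanSpace.single (d i) (1 : ℝ))‖ * Real.exp (-(φ m x))
          ≤ (C * Real.exp (φ (m + 1) x)) * Real.exp (-(φ m x)) :=
          mul_le_mul_of_nonneg_right happ (Real.exp_nonneg _)
        _ = C * Real.exp (-(φ m x - φ (m + 1) x)) := by
            rw [mul_assoc, ← Real.exp_add]
            congr 2
            ring
        _ ≤ C * Real.exp (-Lc) :=
          mul_le_mul_of_nonneg_left (Real.exp_le_exp.mpr (by linarith)) hC0
        _ ≤ δ.toReal := hCL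
    calc (‖iteratedFDeriv ℝ k (fun y => fν ν y - f y) x
          (fun i => EuclideanSpace.single (d i) (1 : ℝ))‖₊ : ENNReal) *
          ENNReal.ofReal (Real.exp (-(φ m x)))
        = ENNReal.ofReal (‖iteratedFDeriv ℝ k (fun y => fν ν y - f y) x
            (fun i => EuclideanSpace.single (d i) (1 : ℝ))‖ * Real.exp (-(φ m x))) := by
          rw [ENNReal.ofReal_mul (norm_nonneg _), ofReal_norm, enorm_eq_nnnorm]
      _ ≤ ENNReal.ofReal δ.toReal := ENNReal.ofReal_le_ofReal hreal
      _ = δ := ENNReal.ofReal_toReal hδtop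
      _ ≤ ε := min_le_left _ _
end

section
/- Let n ≥ 1 and let φ : ℝⁿ → ℝ be a continuous function with φ(x)/‖x‖ → +∞ as ‖x‖ → ∞. Then for every constant C > 0, lim_{N → ∞} (C^N / (N+1)!) · sup_{x ∈ ℝⁿ} (1 + ‖x‖)^{N+1} e^{−φ(x)} = 0. -/
open Real Set Filter

/-! Superlinear growth of `φ` gives `M‖x‖ - c ≤ φ x` for every slope `M`. Take `M = 2C` and
`s = M(1 + ‖x‖)`: from `s ^ k e^{-s} ≤ k!` we get
`(1 + ‖x‖) ^ (N + 1) e^{-φ x} ≤ (N + 1)! e^{c + M} / M ^ (N + 1)`,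
so the `N`-th term is at most `e^{c + M} / M · 2^{-N}`. -/

theorem pow_mul_exp_neg_le_factorial {s : ℝ} (hs : 0 ≤ s) (k : ℕ) :
    s ^ k * exp (-s) ≤ (k.factorial : ℝ) := by
  rw [exp_neg, ← div_eq_mul_inv, div_le_iff₀ (exp_pos s), ← div_le_iff₀' (by positivity)]
  exact pow_div_factorial_le_exp s hs k

theorem one_add_pow_mul_exp_neg_le {M t c y : ℝ} (hM : 0 < M) (ht : 0 ≤ t) (hy : M * t - c ≤ y)
    (k : ℕ) : (1 + t) ^ k * exp (-y) ≤ (k.factorial : ℝ) / M ^ k * exp (c + M) := by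
  have hsplit : exp (-(M * t - c)) = exp (-(M * (1 + t))) * exp (c + M) := by
    rw [← exp_add]; ring_nf
  calc (1 + t) ^ k * exp (-y) ≤ (1 + t) ^ k * exp (-(M * t - c)) := by gcongr
    _ = (M * (1 + t)) ^ k * exp (-(M * (1 + t))) / M ^ k * exp (c + M) := by
      rw [hsplit, mul_pow]; field_simp
    _ ≤ (k.factorial : ℝ) / M ^ k * exp (c + M) := by
      gcongr; exact pow_mul_exp_neg_le_factorial (by positivity) k

section

variable {E : Type*} [NormedAddCommGroup E]

theorem exists_sub_le_of_tendsto_div_norm {φ : E → ℝ} (hφ : Continuous φ)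
    (hgrow : Tendsto (fun x => φ x / ‖x‖) (cocompact E) atTop) (M : ℝ) :
    ∃ c, ∀ x, M * ‖x‖ - c ≤ φ x := by
  obtain ⟨K, hK, hKsub⟩ := mem_cocompact.mp (hgrow.eventually_ge_atTop M)
  -- `0` is added since `φ 0 / ‖0‖ = 0` carries no information about `φ 0`.
  have hK₀ : IsCompact (insert 0 K) := hK.insert 0
  obtain ⟨m, hm⟩ := hK₀.bddBelow_image hφ.continuousOn
  obtain ⟨R, hR⟩ := hK₀.isBounded.subset_closedBall 0
  refine ⟨max (|M| * R - m) 0, fun x => ?_⟩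
  by_cases hx : x ∈ insert 0 K
  · have hxR : ‖x‖ ≤ R := by simpa using hR hx
    have hmx : m ≤ φ x := hm (mem_image_of_mem φ hx)
    nlinarith [le_abs_self M, abs_nonneg M, norm_nonneg x, le_max_left (|M| * R - m) 0]
  · obtain ⟨hx0, hxK⟩ := not_or.mp hx
    have hMx : M ≤ φ x / ‖x‖ := hKsub hxK
    rw [le_div_iff₀ (norm_pos_iff.mpr hx0)] at hMx
    linarith [le_max_right (|M| * R - m) 0]

theorem sSup_one_add_norm_pow_mul_exp_neg_le {φ : E → ℝ} {M c : ℝ} (hM : 0 < M)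
    (hφ : ∀ x, M * ‖x‖ - c ≤ φ x) (k : ℕ) :
    sSup {r : ℝ | ∃ x : E, r = (1 + ‖x‖) ^ k * exp (-(φ x))} ≤
      (k.factorial : ℝ) / M ^ k * exp (c + M) :=
  Real.sSup_le
    (by rintro r ⟨x, rfl⟩; exact one_add_pow_mul_exp_neg_le hM (norm_nonneg x) (hφ x) k)
    (by positivity)

end

theorem factorial_beats_weighted_polynomial_sup_general (n : ℕ)
    (φ : EuclideanSpace ℝ (Fin n) → ℝ) (hφ : Continuous φ)
    (hgrow : Tendsto (fun x => φ x / ‖x‖) (cocompact (EuclideanSpace ℝ (Fin n))) atTop) :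
    ∀ C : ℝ, 0 < C →
      Tendsto (fun N : ℕ =>
          C ^ N / ((N + 1).factorial : ℝ) *
            sSup {r : ℝ | ∃ x : EuclideanSpace ℝ (Fin n),
              r = (1 + ‖x‖) ^ (N + 1) * Real.exp (-(φ x))})
        atTop (nhds 0) := by
  intro C hC
  obtain ⟨c, hc⟩ := exists_sub_le_of_tendsto_div_norm hφ hgrow (2 * C)
  have hgeom : Tendsto (fun N : ℕ => exp (c + 2 * C) / (2 * C) * (1 / 2 : ℝ) ^ N) atTop
      (nhds 0) := by
    simpa using (tendsto_pow_atTop_nhds_zero_of_lt_one (by norm_num : (0 : ℝ) ≤ 1 / 2)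
      (by norm_num)).const_mul (exp (c + 2 * C) / (2 * C))
  refine squeeze_zero (fun N => mul_nonneg (by positivity) ?_) (fun N => ?_) hgeom
  · exact Real.sSup_nonneg (by rintro r ⟨x, rfl⟩; positivity)
  · calc _ ≤ C ^ N / ((N + 1).factorial : ℝ) *
          (((N + 1).factorial : ℝ) / (2 * C) ^ (N + 1) * exp (c + 2 * C)) := by
          gcongr; exact sSup_one_add_norm_pow_mul_exp_neg_le (by positivity) hc (N + 1)
      _ = exp (c + 2 * C) / (2 * C) * (1 / 2) ^ N := by
          rw [one_div_pow]; field_simp; ring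

/-- If `φ : ℝⁿ → ℝ` is continuous with `φ(x)/‖x‖ → ∞` as `‖x‖ → ∞`, then for every
constant `C > 0`, `(C^N / (N+1)!) · sup_{x} (1 + ‖x‖)^{N+1} e^{-φ(x)} → 0` as `N → ∞`. -/
theorem factorial_beats_weighted_polynomial_sup (n : ℕ) (hn : 1 ≤ n)
    (φ : EuclideanSpace ℝ (Fin n) → ℝ) (hφ : Continuous φ)
    (hgrow : Tendsto (fun x => φ x / ‖x‖) (cocompact (EuclideanSpace ℝ (Fin n))) atTop) :
    ∀ C : ℝ, 0 < C →
      Tendsto (fun N : ℕ =>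
          C ^ N / ((N + 1).factorial : ℝ) *
            sSup {r : ℝ | ∃ x : EuclideanSpace ℝ (Fin n),
              r = (1 + ‖x‖) ^ (N + 1) * Real.exp (-(φ x))})
        atTop (nhds 0) :=
  factorial_beats_weighted_polynomial_sup_general n φ hφ hgrow
end

section
/- Let h : ℝ → ℝ be defined by h(x) = sin²(x/2)/x² for x ≠ 0 and h(0) = 1/4. Then h is a C^∞ function, h(x) ≥ 0 for all x ∈ ℝ, h is integrable on ℝ, and there exists a constant C > 0 such that |h^{(k)}(x)| ≤ C for every k ∈ ℕ and every x ∈ ℝ. -/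
open Real Set Filter MeasureTheory FourierTransform Topology

/-! ### Auxiliary: the triangle function and its Fourier transform -/

noncomputable def trigC : ℝ → ℂ := fun t => ((max (1 - |t|) 0 : ℝ) : ℂ)

lemma trigC_cont : Continuous trigC :=
  Complex.continuous_ofReal.comp ((continuous_const.sub continuous_abs).max continuous_const)

lemma trigC_zero {t : ℝ} (ht : 1 ≤ |t|) : trigC t = 0 := by
  unfold trigC
  simp [max_eq_right (by linarith : 1 - |t| ≤ 0)]

lemma trigC_zero_outside {t : ℝ} (ht : t ∉ Set.Icc (-1 : ℝ) 1) : trigC t = 0 := by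
  apply trigC_zero
  simp only [Set.mem_Icc, not_and_or, not_le] at ht
  rcases ht with h | h <;> [exact le_abs.2 (Or.inr (by linarith)); exact le_abs.2 (Or.inl h.le)]

lemma trigC_supp : HasCompactSupport trigC :=
  HasCompactSupport.intro (isCompact_Icc (a := (-1:ℝ)) (b := 1)) fun _ => trigC_zero_outside

lemma trigC_int (n : ℕ) : Integrable (fun t : ℝ => t ^ n • trigC t) := by
  apply Continuous.integrable_of_hasCompactSupport
  · exact (continuous_pow n).smul trigC_cont
  · apply HasCompactSupport.intro (isCompact_Icc (a := (-1:ℝ)) (b := 1))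
    intro t ht
    simp [trigC_zero_outside ht]

lemma trigC_norm_int (n : ℕ) : Integrable (fun t : ℝ => ‖t‖ ^ n * ‖trigC t‖) := by
  have := (trigC_int n).norm
  simpa [norm_smul] using this

lemma norm_trigC_le (t : ℝ) : ‖trigC t‖ ≤ 1 := by
  unfold trigC
  rw [Complex.norm_real, Real.norm_eq_abs, abs_of_nonneg (le_max_right _ _)]
  rcases le_or_gt (1:ℝ) (|t|) with h | h
  · simp [max_eq_right (by linarith : 1 - |t| ≤ 0)]
  · rw [max_eq_left (by linarith)]
    have := abs_nonneg t
    linarith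

lemma fourier_re (x : ℝ) : (𝓕 trigC ((2 * π)⁻¹ * x)).re
    = ∫ t : ℝ, (max (1 - |t|) 0) * Real.cos (t * x) := by
  rw [Real.fourier_real_eq_integral_exp_smul]
  have hint : Integrable (fun v : ℝ =>
      Complex.exp (↑(-2 * π * v * ((2 * π)⁻¹ * x)) * Complex.I) • trigC v) := by
    apply Continuous.integrable_of_hasCompactSupport
    · apply Continuous.smul (f := fun v : ℝ => Complex.exp (↑(-2 * π * v * ((2 * π)⁻¹ * x)) * Complex.I)) _ trigC_cont
      exact Complex.continuous_exp.comp ((Complex.continuous_ofReal.comp (by continuity)).mul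
        continuous_const)
    · apply HasCompactSupport.intro (isCompact_Icc (a := (-1:ℝ)) (b := 1))
      intro t ht
      simp [trigC_zero_outside ht]
  rw [← Complex.reCLM_apply, ← ContinuousLinearMap.integral_comp_comm _ hint]
  congr 1
  funext v
  have harg : -2 * π * v * ((2 * π)⁻¹ * x) = -(v * x) := by
    field_simp
  simp only [Complex.reCLM_apply, harg, smul_eq_mul, trigC]
  rw [Complex.mul_re]
  rw [Complex.exp_ofReal_mul_I_re, Real.cos_neg]
  simp [mul_comm]

/-! ### Auxiliary: interval integral computations -/

lemma E1 (x : ℝ) (hx : x ≠ 0) :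
    ∫ t in (0:ℝ)..1, (1 - t) * Real.cos (t * x) = (1 - Real.cos x) / x ^ 2 := by
  have h : ∀ t ∈ Set.uIcc (0:ℝ) 1,
      HasDerivAt (fun t : ℝ => (1 - t) * Real.sin (t * x) / x - Real.cos (t * x) / x ^ 2)
        ((1 - t) * Real.cos (t * x)) t := by
    intro t _
    have h1 : HasDerivAt (fun t : ℝ => t * x) x t := by
      simpa using (hasDerivAt_id t).mul_const x
    have h2 : HasDerivAt (fun t : ℝ => Real.sin (t * x)) (Real.cos (t * x) * x) t :=
      h1.sin
    have h3 : HasDerivAt (fun t : ℝ => Real.cos (t * x)) (-Real.sin (t * x) * x) t :=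
      h1.cos
    have h4 : HasDerivAt (fun t : ℝ => (1 - t)) (-1) t := by
      exact (hasDerivAt_id' t).const_sub 1
    have := ((h4.mul h2).div_const x).sub (h3.div_const (x ^ 2))
    refine this.congr_deriv ?_
    field_simp
    ring
  rw [intervalIntegral.integral_eq_sub_of_hasDerivAt h]
  · simp
    field_simp
    ring
  · apply Continuous.intervalIntegrable
    continuity

lemma E0 : ∫ t in (0:ℝ)..1, (1 - t) * Real.cos (t * 0) = 1 / 2 := by
  simp only [mul_zero, Real.cos_zero, mul_one]
  simp [intervalIntegral.integral_sub intervalIntegrable_const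
    (intervalIntegral.intervalIntegrable_id)]
  norm_num

lemma Epos (x : ℝ) : ∫ t in (0:ℝ)..1, (1 - t) * Real.cos (t * x)
    = (if x = 0 then 1/2 else (1 - Real.cos x) / x ^ 2) := by
  split_ifs with hx
  · subst hx; exact E0
  · exact E1 x hx

lemma Eneg (x : ℝ) : ∫ t in (-1:ℝ)..0, (1 + t) * Real.cos (t * x)
    = ∫ t in (0:ℝ)..1, (1 - t) * Real.cos (t * x) := by
  have := intervalIntegral.integral_comp_neg (a := (0:ℝ)) (b := 1)
    (fun t => (1 + t) * Real.cos (t * x))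
  rw [show (-0:ℝ) = 0 by norm_num] at this
  rw [← this]
  apply intervalIntegral.integral_congr
  intro t _
  simp only [neg_mul, Real.cos_neg, add_neg_cancel_left, ← sub_eq_add_neg]

lemma Jval (x : ℝ) : ∫ t in (-1:ℝ)..1, (1 - |t|) * Real.cos (t * x)
    = (if x = 0 then 1 else 2 * ((1 - Real.cos x) / x ^ 2)) := by
  have hsplit : ∫ t in (-1:ℝ)..1, (1 - |t|) * Real.cos (t * x)
      = (∫ t in (-1:ℝ)..0, (1 - |t|) * Real.cos (t * x))
        + ∫ t in (0:ℝ)..1, (1 - |t|) * Real.cos (t * x) := by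
    rw [intervalIntegral.integral_add_adjacent_intervals] <;>
      exact (Continuous.intervalIntegrable (by continuity) _ _)
  have c1 : ∫ t in (-1:ℝ)..0, (1 - |t|) * Real.cos (t * x)
      = ∫ t in (-1:ℝ)..0, (1 + t) * Real.cos (t * x) := by
    apply intervalIntegral.integral_congr
    intro t ht
    rw [Set.uIcc_of_le (by norm_num : (-1:ℝ) ≤ 0)] at ht
    simp only [abs_of_nonpos ht.2, sub_neg_eq_add]
  have c2 : ∫ t in (0:ℝ)..1, (1 - |t|) * Real.cos (t * x)
      = ∫ t in (0:ℝ)..1, (1 - t) * Real.cos (t * x) := by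
    apply intervalIntegral.integral_congr
    intro t ht
    rw [Set.uIcc_of_le (by norm_num : (0:ℝ) ≤ 1)] at ht
    simp only [abs_of_nonneg ht.1]
  rw [hsplit, c1, c2, Eneg, Epos]
  split_ifs <;> ring

lemma key (x : ℝ) : (𝓕 trigC ((2 * π)⁻¹ * x)).re
    = (if x = 0 then 1 else 2 * ((1 - Real.cos x) / x ^ 2)) := by
  rw [fourier_re, ← Jval]
  rw [← intervalIntegral.integral_eq_integral_of_support_subset (a := (-1:ℝ)) (b := 1)]
  · apply intervalIntegral.integral_congr
    intro t ht
    rw [Set.uIcc_of_le (by norm_num : (-1:ℝ) ≤ 1)] at ht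
    have h1 : |t| ≤ 1 := abs_le.2 ⟨ht.1, ht.2⟩
    have h2 : max (1 - |t|) 0 = 1 - |t| := max_eq_left (by linarith)
    simp only [h2]
  · intro t ht
    rw [Function.mem_support] at ht
    by_contra hmem
    simp only [Set.mem_Ioc, not_and_or, not_lt, not_le] at hmem
    apply ht
    have habs : (1:ℝ) ≤ |t| := by
      rcases hmem with h | h
      · exact le_abs.2 (Or.inr (by linarith))
      · exact le_abs.2 (Or.inl h.le)
    rw [max_eq_right (by linarith), zero_mul]

/-! ### Auxiliary: iterated derivative helpers -/

lemma iteratedDeriv_reCLM {n : ℕ} {f : ℝ → ℂ} (hf : ContDiff ℝ n f) (x : ℝ) :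
    iteratedDeriv n (fun y => (f y).re) x = (iteratedDeriv n f x).re := by
  have hcomp : (fun y => (f y).re) = (Complex.reCLM : ℂ →L[ℝ] ℝ) ∘ f := rfl
  rw [hcomp, iteratedDeriv_eq_iteratedFDeriv, iteratedDeriv_eq_iteratedFDeriv,
    ContinuousLinearMap.iteratedFDeriv_comp_left _ hf.contDiffAt le_rfl]
  rfl

lemma iteratedDeriv_const_mul' {n : ℕ} {f : ℝ → ℝ} (hf : ContDiff ℝ n f) (c : ℝ) (x : ℝ) :
    iteratedDeriv n (fun y => c * f y) x = c * iteratedDeriv n f x := by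
  have hcomp : (fun y => c * f y) = c • f := by funext y; simp
  rw [hcomp, iteratedDeriv_eq_iteratedFDeriv, iteratedDeriv_eq_iteratedFDeriv,
    iteratedFDeriv_const_smul_apply hf.contDiffAt]
  simp

/-! ### Auxiliary: analyticity via removable singularity -/

noncomputable def Fc : ℂ → ℂ :=
  fun z => if z = 0 then (1/4 : ℂ) else (1 - Complex.cos z) / (2 * z ^ 2)

lemma Fc_eq_sin {z : ℂ} (hz : z ≠ 0) :
    Fc z = (2⁻¹ * ((z / 2)⁻¹ * Complex.sin (z / 2))) ^ 2 := by
  rw [Fc, if_neg hz]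
  have hcos : Complex.cos z = 1 - 2 * Complex.sin (z / 2) ^ 2 := by
    have h1 := Complex.cos_two_mul (z / 2)
    rw [show 2 * (z / 2) = z by ring] at h1
    have h2 := Complex.sin_sq_add_cos_sq (z / 2)
    rw [h1]
    linear_combination (2:ℂ) * h2
  rw [hcos]
  field_simp
  ring

lemma Fc_analytic_ne {c : ℂ} (hc : c ≠ 0) : AnalyticAt ℂ Fc c := by
  have hA : AnalyticAt ℂ (fun z => (1 - Complex.cos z) / (2 * z ^ 2)) c := by
    apply AnalyticAt.div
    · exact (analyticAt_const.sub (Complex.differentiable_cos.analyticAt c))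
    · exact (analyticAt_const.mul ((analyticAt_id).pow 2))
    · simpa using pow_ne_zero 2 hc
  apply hA.congr
  filter_upwards [isOpen_compl_singleton.mem_nhds hc] with z hz
  exact (if_neg (show z ≠ 0 by simpa using hz)).symm

lemma tendsto_Fc : Tendsto Fc (𝓝[≠] (0:ℂ)) (𝓝 (1/4 : ℂ)) := by
  have hs : Tendsto (fun w : ℂ => w⁻¹ * Complex.sin w) (𝓝[≠] (0:ℂ)) (𝓝 1) := by
    have := hasDerivAt_iff_tendsto_slope.1 (Complex.hasDerivAt_sin 0)
    rw [Complex.cos_zero] at this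
    apply this.congr'
    filter_upwards [self_mem_nhdsWithin] with w hw
    rw [slope_def_field]
    simp [div_eq_inv_mul]
  have hhalf : Tendsto (fun z : ℂ => z / 2) (𝓝[≠] (0:ℂ)) (𝓝[≠] (0:ℂ)) := by
    rw [tendsto_nhdsWithin_iff]
    constructor
    · have : Tendsto (fun z : ℂ => z / 2) (𝓝 0) (𝓝 (0 / 2)) :=
        (continuous_id.div_const 2).tendsto 0
      simpa using this.mono_left nhdsWithin_le_nhds
    · filter_upwards [self_mem_nhdsWithin] with z hz
      simpa using div_ne_zero hz two_ne_zero
  have hT : Tendsto (fun z : ℂ => (2⁻¹ * ((z / 2)⁻¹ * Complex.sin (z / 2))) ^ 2)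
      (𝓝[≠] (0:ℂ)) (𝓝 ((2⁻¹ * 1) ^ 2)) :=
    ((hs.comp hhalf).const_mul (2⁻¹ : ℂ)).pow 2
  have h14 : ((2⁻¹ : ℂ) * 1) ^ 2 = 1/4 := by norm_num
  rw [h14] at hT
  apply hT.congr'
  filter_upwards [self_mem_nhdsWithin] with z hz
  exact (Fc_eq_sin hz).symm

lemma Fc_analytic (c : ℂ) : AnalyticAt ℂ Fc c := by
  rcases eq_or_ne c 0 with rfl | hc
  · apply Complex.analyticAt_of_differentiable_on_punctured_nhds_of_continuousAt
    · filter_upwards [self_mem_nhdsWithin] with z hz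
      exact (Fc_analytic_ne hz).differentiableAt
    · rw [ContinuousAt, show Fc 0 = 1/4 from if_pos rfl]
      rw [← nhdsNE_sup_pure (0:ℂ)]
      apply Tendsto.sup tendsto_Fc
      have h4 : Fc 0 = 1/4 := if_pos rfl
      simpa [h4] using tendsto_pure_nhds Fc 0
  · exact Fc_analytic_ne hc

/-! ### The main theorem -/

/-- The function `h(x) = sin²(x/2)/x²` (with `h(0) = 1/4`) is smooth, nonnegative,
integrable on `ℝ`, and all of its derivatives are uniformly bounded by a single
constant `C > 0`. -/
theorem sin_sq_div_sq_smooth_nonneg_integrable_bddDerivs (h : ℝ → ℝ)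
    (hdef : ∀ x : ℝ, x ≠ 0 → h x = Real.sin (x / 2) ^ 2 / x ^ 2)
    (h0 : h 0 = 1 / 4) :
    ContDiff ℝ (⊤ : ℕ∞) h ∧ (∀ x : ℝ, 0 ≤ h x) ∧ Integrable h ∧
      ∃ C : ℝ, 0 < C ∧ ∀ (k : ℕ) (x : ℝ), |iteratedDeriv k h x| ≤ C := by
  have hπ : (2 * π) ≠ 0 := by positivity
  have hsin : ∀ x : ℝ, Real.sin (x / 2) ^ 2 = 1 / 2 - Real.cos x / 2 := by
    intro x
    have := Real.sin_sq_eq_half_sub (x / 2)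
    rwa [show 2 * (x / 2) = x by ring] at this
  -- `h` as the real part of the complex analytic function `Fc`
  have hvalF : ∀ x : ℝ, h x = (Fc (x : ℂ)).re := by
    intro x
    rcases eq_or_ne x 0 with rfl | hx
    · rw [h0, show ((0:ℝ):ℂ) = 0 by norm_num, show Fc 0 = 1/4 from if_pos rfl]
      norm_num
    · have hxC : ((x : ℝ) : ℂ) ≠ 0 := by exact_mod_cast hx
      rw [Fc, if_neg hxC, hdef x hx, hsin x]
      have : ((1:ℂ) - Complex.cos x) / (2 * (x:ℂ) ^ 2)
          = (((1 - Real.cos x) / (2 * x ^ 2) : ℝ) : ℂ) := by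
        rw [← Complex.ofReal_cos]
        push_cast
        ring
      rw [this, Complex.ofReal_re]
      field_simp
  -- smoothness (`⊤` here is `ω`, i.e. analyticity)
  have hsmooth : ContDiff ℝ (⊤ : ℕ∞) h := by
    apply AnalyticOnNhd.contDiff
    intro x _
    have hx : AnalyticAt ℝ (fun y : ℝ => (Fc (y : ℂ)).re) x := by
      apply (Complex.reCLM.analyticAt _).comp
      exact ((Fc_analytic _).restrictScalars).comp (Complex.ofRealCLM.analyticAt x)
    exact hx.congr (Filter.Eventually.of_forall fun y => (hvalF y).symm)
  -- the Fourier transform of the triangle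
  set H : ℝ → ℂ := 𝓕 trigC with hH
  have Hcd : ContDiff ℝ ((⊤ : ℕ∞) : WithTop ℕ∞) H :=
    Real.contDiff_fourier (fun n _ => trigC_norm_int n)
  -- `h` agrees with `(1/4) * Re (H ((2π)⁻¹ x))`
  have hval : ∀ x : ℝ, h x = (1/4) * (H ((2 * π)⁻¹ * x)).re := by
    intro x
    rw [hH, key]
    rcases eq_or_ne x 0 with rfl | hx
    · simp [h0]
    · rw [if_neg hx, hdef x hx, hsin x]
      field_simp
      ring
  have hfun : h = fun x => (1/4) * (H ((2 * π)⁻¹ * x)).re := funext hval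
  refine ⟨hsmooth, ?_, ?_, ?_⟩
  · -- nonnegativity
    intro x
    rcases eq_or_ne x 0 with rfl | hx
    · rw [h0]; norm_num
    · rw [hdef x hx]; positivity
  · -- integrability
    have hbound : ∀ x : ℝ, ‖h x‖ ≤ 2 * (1 + x ^ 2)⁻¹ := by
      intro x
      rw [show 2 * (1 + x ^ 2)⁻¹ = 2 / (1 + x ^ 2) from by rw [div_eq_mul_inv]]
      rcases eq_or_ne x 0 with rfl | hx
      · rw [h0]
        norm_num
      · rw [hdef x hx, Real.norm_eq_abs, abs_of_nonneg (by positivity)]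
        rw [div_le_div_iff₀ (by positivity) (by positivity)]
        have h1 : Real.sin (x / 2) ^ 2 ≤ 1 := by
          have := Real.neg_one_le_sin (x/2)
          have := Real.sin_le_one (x/2)
          nlinarith
        have h2 : Real.sin (x / 2) ^ 2 ≤ x ^ 2 / 4 := by
          have habs : |Real.sin (x / 2)| ≤ |x / 2| := Real.abs_sin_le_abs (x := x / 2)
          calc Real.sin (x / 2) ^ 2 = |Real.sin (x/2)| ^ 2 := (sq_abs _).symm
          _ ≤ |x / 2| ^ 2 := by gcongr
          _ = (x / 2) ^ 2 := sq_abs _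
          _ = x ^ 2 / 4 := by ring
        nlinarith [mul_le_mul_of_nonneg_right h1 (sq_nonneg x), sq_nonneg x]
    apply Integrable.mono' (integrable_inv_one_add_sq.const_mul 2)
      (hsmooth.continuous.aestronglyMeasurable)
    exact Filter.Eventually.of_forall hbound
  · -- bounded derivatives
    refine ⟨1, one_pos, fun k x => ?_⟩
    have hDH : iteratedDeriv k H = 𝓕 (fun t : ℝ => (-2 * π * Complex.I * t) ^ k • trigC t) :=
      Real.iteratedDeriv_fourier (N := (⊤ : ℕ∞))
        (fun n _ => trigC_int n) le_top
    -- norm bound on iterated derivative of H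
    have hnorm : ∀ ξ : ℝ, ‖iteratedDeriv k H ξ‖ ≤ (2 * π) ^ k * 2 := by
      intro ξ
      rw [hDH]
      refine le_trans (VectorFourier.norm_fourierIntegral_le_integral_norm _ _ _ _ _) ?_
      have heq : ∀ t : ℝ, ‖(-2 * π * Complex.I * t) ^ k • trigC t‖
          = (2 * π) ^ k * (‖t‖ ^ k * ‖trigC t‖) := by
        intro t
        have e1 : (-2 * (π:ℂ) * Complex.I * t) = ((2 * π * t : ℝ) : ℂ) * (-Complex.I) := by
          push_cast
          ring
        rw [norm_smul, norm_pow, e1, norm_mul, Complex.norm_real, norm_neg, Complex.norm_I,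
          mul_one, Real.norm_eq_abs, abs_mul, abs_of_pos Real.two_pi_pos, mul_pow,
          Real.norm_eq_abs]
        ring
      rw [show (∫ t : ℝ, ‖(-2 * π * Complex.I * t) ^ k • trigC t‖)
          = ∫ t : ℝ, (2 * π) ^ k * (‖t‖ ^ k * ‖trigC t‖) from by simp_rw [heq]]
      rw [MeasureTheory.integral_const_mul]
      have hle2 : ∫ t : ℝ, ‖t‖ ^ k * ‖trigC t‖ ≤ 2 := by
        have hind : ∫ t : ℝ, Set.indicator (Set.Icc (-1:ℝ) 1) (fun _ => (1:ℝ)) t = 2 := by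
          rw [MeasureTheory.integral_indicator_const _ measurableSet_Icc]
          simp [Real.volume_Icc]
          norm_num
        rw [← hind]
        apply MeasureTheory.integral_mono (trigC_norm_int k)
        · exact (integrable_indicator_iff measurableSet_Icc).2
            (integrableOn_const (by simp [Real.volume_Icc]))
        · intro t
          show ‖t‖ ^ k * ‖trigC t‖ ≤ Set.indicator (Set.Icc (-1:ℝ) 1) (fun _ => (1:ℝ)) t
          rcases le_or_gt (|t|) 1 with ht | ht
          · have hmem : t ∈ Set.Icc (-1:ℝ) 1 := abs_le.1 ht
            rw [Set.indicator_of_mem hmem]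
            have h1 : ‖t‖ ^ k ≤ 1 := by
              rw [Real.norm_eq_abs]
              exact pow_le_one₀ (abs_nonneg t) ht
            have h2 := norm_trigC_le t
            have h3 : (0:ℝ) ≤ ‖trigC t‖ := norm_nonneg _
            nlinarith [pow_nonneg (norm_nonneg t) k]
          · have h0t : trigC t = 0 := trigC_zero ht.le
            rw [h0t]
            simp [Set.indicator_nonneg]
      exact mul_le_mul_of_nonneg_left hle2 (by positivity)
    -- chain rule computations
    have hcdH : ContDiff ℝ (k : ℕ) H := Hcd.of_le (by exact_mod_cast le_top)
    have hu : iteratedDeriv k (fun y => H ((2 * π)⁻¹ * y))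
        = fun y => ((2 * π)⁻¹ : ℝ) ^ k • iteratedDeriv k H ((2 * π)⁻¹ * y) :=
      iteratedDeriv_comp_const_smul hcdH _
    have hv : iteratedDeriv k h x
        = (1/4) * (iteratedDeriv k (fun y => H ((2 * π)⁻¹ * y)) x).re := by
      rw [hfun]
      rw [iteratedDeriv_const_mul' (f := fun y => (H ((2 * π)⁻¹ * y)).re) ?_ (1/4) x]
      · congr 1
        exact iteratedDeriv_reCLM (hcdH.comp ((contDiff_const).mul contDiff_id)) x
      · exact (Complex.reCLM.contDiff.comp (hcdH.comp ((contDiff_const).mul contDiff_id)))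
    rw [hv, hu]
    have hre : |((((2 * π)⁻¹ : ℝ) ^ k • iteratedDeriv k H ((2 * π)⁻¹ * x))).re|
        ≤ ((2 * π)⁻¹) ^ k * ((2 * π) ^ k * 2) := by
      refine le_trans (Complex.abs_re_le_norm _) ?_
      rw [norm_smul, Real.norm_eq_abs,
        abs_of_pos (by positivity : (0:ℝ) < ((2 * π)⁻¹) ^ k)]
      exact mul_le_mul_of_nonneg_left (hnorm _) (by positivity)
    have hfin : ((2 * π)⁻¹ : ℝ) ^ k * ((2 * π) ^ k * 2) = 2 := by
      rw [← mul_assoc, ← mul_pow, inv_mul_cancel₀ hπ, one_pow, one_mul]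
    rw [abs_mul]
    calc |1/4| * |((((2 * π)⁻¹ : ℝ) ^ k • iteratedDeriv k H ((2 * π)⁻¹ * x))).re|
        ≤ (1/4) * (((2 * π)⁻¹) ^ k * ((2 * π) ^ k * 2)) := by
          rw [abs_of_pos (by norm_num : (0:ℝ) < 1/4)]
          exact mul_le_mul_of_nonneg_left hre (by norm_num)
      _ = 1/2 := by rw [hfin]; norm_num
      _ ≤ 1 := by norm_num
end

section
/- Let (φ_m)_{m≥1} be continuous functions φ_m : ℝ → ℝ, fix m ∈ ℕ, and assume the compact-embedding property: every sequence (u_j) of functions in C^{m+1}(ℝ) with q_{φ_{m+1},m+1}(u_j) ≤ 1 for all j has a subsequence that converges with respect to the norm q_{φ_m,m} to some u ∈ C^m(ℝ) with q_{φ_m,m}(u) < ∞. Let (c_k^{(m)})_{k≥1} and (c_k^{(m+1)})_{k≥1} be sequences of positive numbers with Σ_{k=1}^∞ c_k^{(m)}/c_k^{(m+1)} < ∞. For a sequence f = (f_1, f_2, …) of functions on ℝ set p_m(f) = Σ_{k=1}^∞ c_k^{(m)} q_{φ_m,m}(f_k) and p_{m+1}(f) = Σ_{k=1}^∞ c_k^{(m+1)}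 q_{φ_{m+1},m+1}(f_k). Then for every r > 0, every sequence (f^{(j)})_{j≥1} with each f^{(j)}_k ∈ C^{m+1}(ℝ) and p_{m+1}(f^{(j)}) ≤ r for all j has a subsequence that is Cauchy with respect to p_m; that is, the ball {f : p_{m+1}(f) ≤ r} is relatively compact for the norm p_m (the embedding T_{m+1} → T_m is completely continuous). -/
open Real Set Filter

/-- The weighted seminorm `q_{φ,m}(g) = sup_{x ∈ ℝ, 0 ≤ k ≤ m} |g^{(k)}(x)| e^{-φ(x)}`,
valued in `ℝ≥0∞` so that it is always defined. -/
noncomputable def qSeminorm (φ : ℝ → ℝ) (m : ℕ) (g : ℝ → ℂ) : ENNReal :=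
  ⨆ (k : ℕ) (_ : k ≤ m) (x : ℝ),
    (‖iteratedDeriv k g x‖₊ : ENNReal) * ENNReal.ofReal (Real.exp (-(φ x)))

/-- The weighted norm `p(f) = Σ_k c_k q_{φ,m}(f_k)` on sequences `f = (f_1, f_2, …)` of
functions on `ℝ`, valued in `ℝ≥0∞`. -/
noncomputable def pNorm (c : ℕ → ℝ) (φ : ℝ → ℝ) (m : ℕ) (f : ℕ → ℝ → ℂ) : ENNReal :=
  ∑' k : ℕ, ENNReal.ofReal (c k) * qSeminorm φ m (f k)

/-!
Rescaling the `k`-th coordinates by `c'_k / r` puts all of them in the unit ball of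
`q_{φ_{m+1},m+1}`. The compact embedding yields, for each `k`, a `q_{φ_m,m}`-Cauchy subsequence,
and also a bound `q_{φ_m,m} ≤ C` on that unit ball (a sequence there with `q_{φ_m,m} → ∞` would
have a convergent subsequence). A diagonal subsequence is then Cauchy in every coordinate, and
since the `k`-th term of `p_m` is at most `2 C r c_k / c'_k`, dominated convergence for series
makes it Cauchy for `p_m`.
-/

open Topology MeasureTheory
open scoped ENNReal

section qSeminorm

variable (φ : ℝ → ℝ) (n : ℕ)

lemma le_qSeminorm (g : ℝ → ℂ) {k : ℕ} (hk : k ≤ n) (x : ℝ) :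
    ‖iteratedDeriv k g x‖ₑ * ENNReal.ofReal (Real.exp (-φ x)) ≤ qSeminorm φ n g :=
  le_iSup_of_le k (le_iSup_of_le hk (le_iSup_of_le x le_rfl))

lemma qSeminorm_neg (g : ℝ → ℂ) : qSeminorm φ n (-g) = qSeminorm φ n g := by
  simp only [qSeminorm, iteratedDeriv_neg, nnnorm_neg]

lemma qSeminorm_smul (a : ℝ) (g : ℝ → ℂ) :
    qSeminorm φ n (a • g) = ‖a‖ₑ * qSeminorm φ n g := by
  simp only [qSeminorm, iteratedDeriv_const_smul_field, nnnorm_smul, ENNReal.coe_mul,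
    ENNReal.mul_iSup, mul_assoc]
  rfl

variable {φ n}

lemma qSeminorm_add_le {f g : ℝ → ℂ} (hf : ContDiff ℝ n f) (hg : ContDiff ℝ n g) :
    qSeminorm φ n (f + g) ≤ qSeminorm φ n f + qSeminorm φ n g := by
  refine iSup₂_le fun k hk => iSup_le fun x => ?_
  have hkn : (k : WithTop ℕ∞) ≤ n := by exact_mod_cast hk
  rw [iteratedDeriv_add (hf.contDiffAt.of_le hkn) (hg.contDiffAt.of_le hkn)]
  calc ‖iteratedDeriv k f x + iteratedDeriv k g x‖ₑ * ENNReal.ofReal (Real.exp (-φ x))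
      ≤ (‖iteratedDeriv k f x‖ₑ + ‖iteratedDeriv k g x‖ₑ) *
          ENNReal.ofReal (Real.exp (-φ x)) := by
        gcongr
        exact enorm_add_le _ _
    _ ≤ qSeminorm φ n f + qSeminorm φ n g := by
        rw [add_mul]
        exact add_le_add (le_qSeminorm φ n f hk x) (le_qSeminorm φ n g hk x)

lemma qSeminorm_sub_le {f g : ℝ → ℂ} (hf : ContDiff ℝ n f) (hg : ContDiff ℝ n g) :
    qSeminorm φ n (f - g) ≤ qSeminorm φ n f + qSeminorm φ n g := by
  rw [sub_eq_add_neg, ← qSeminorm_neg φ n g]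
  exact qSeminorm_add_le hf hg.neg

lemma qSeminorm_sub_le_sub_add_sub {f g h : ℝ → ℂ} (hf : ContDiff ℝ n f)
    (hg : ContDiff ℝ n g) (hh : ContDiff ℝ n h) :
    qSeminorm φ n (f - h) ≤ qSeminorm φ n (f - g) + qSeminorm φ n (h - g) := by
  simpa using qSeminorm_sub_le (φ := φ) (f := f - g) (g := h - g) (hf.sub hg) (hh.sub hg)

lemma qSeminorm_le_sub_add {f g : ℝ → ℂ} (hf : ContDiff ℝ n f) (hg : ContDiff ℝ n g) :
    qSeminorm φ n f ≤ qSeminorm φ n (f - g) + qSeminorm φ n g := by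
  simpa using qSeminorm_add_le (φ := φ) (f := f - g) (hf.sub hg) hg

end qSeminorm

lemma pNorm_eq_tsum_smul (c a : ℕ → ℝ) (ha : ∀ k, 0 < a k) (φ : ℝ → ℝ) (n : ℕ)
    (f : ℕ → ℝ → ℂ) :
    pNorm c φ n f = ∑' k, ENNReal.ofReal (c k / a k) * qSeminorm φ n (a k • f k) := by
  refine tsum_congr fun k => ?_
  rw [qSeminorm_smul, Real.enorm_eq_ofReal (ha k).le, ← mul_assoc,
    ← ENNReal.ofReal_mul' (ha k).le, div_mul_cancel₀ _ (ha k).ne']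

lemma qSeminorm_smul_le_one_of_pNorm_le {c : ℕ → ℝ} {φ : ℝ → ℝ} {n : ℕ} {f : ℕ → ℝ → ℂ}
    {r : ℝ} (hr : 0 < r) (h : pNorm c φ n f ≤ ENNReal.ofReal r) {k : ℕ} (hc : 0 ≤ c k) :
    qSeminorm φ n ((c k / r) • f k) ≤ 1 := by
  have hk : ENNReal.ofReal (c k) * qSeminorm φ n (f k) ≤ ENNReal.ofReal r :=
    (ENNReal.le_tsum k).trans h
  rw [qSeminorm_smul, Real.enorm_eq_ofReal (div_nonneg hc hr.le), ENNReal.ofReal_div_of_pos hr,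
    ← ENNReal.mul_div_right_comm]
  exact ENNReal.div_le_of_le_mul (by rwa [one_mul])

lemma ENNReal.tendsto_tsum_of_dominated_convergence {α β : Type*} [Countable β] {l : Filter α}
    [l.IsCountablyGenerated] {f : α → β → ℝ≥0∞} {g : β → ℝ≥0∞} (bound : β → ℝ≥0∞)
    (h_fin : ∑' k, bound k ≠ ∞) (h_lim : ∀ k, Tendsto (f · k) l (𝓝 (g k)))
    (h_bound : ∀ᶠ a in l, ∀ k, f a k ≤ bound k) :
    Tendsto (fun a => ∑' k, f a k) l (𝓝 (∑' k, g k)) := by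
  let _ : MeasurableSpace β := ⊤
  have : MeasurableSingletonClass β := ⟨fun _ => trivial⟩
  simp only [← lintegral_count]
  exact tendsto_lintegral_filter_of_dominated_convergence bound
    (.of_forall fun _ => measurable_of_countable _) (h_bound.mono fun _ h => .of_forall h)
    (by rwa [lintegral_count]) (.of_forall h_lim)

def CauchySeqWrt {X : Type*} (d : X → X → ℝ≥0∞) (u : ℕ → X) : Prop :=
  Tendsto (fun p : ℕ × ℕ => d (u p.1) (u p.2)) (atTop ×ˢ atTop) (𝓝 0)

namespace CauchySeqWrt

variable {X : Type*} {d : X → X → ℝ≥0∞} {u : ℕ → X}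

lemma comp_of_map_le {θ ψ : ℕ → ℕ} (h : CauchySeqWrt d (u ∘ θ))
    (hψ : map ψ atTop ≤ map θ atTop) : CauchySeqWrt d (u ∘ ψ) := by
  have hθ : Tendsto (fun p : ℕ × ℕ => d (u p.1) (u p.2)) (map θ atTop ×ˢ map θ atTop) (𝓝 0) := by
    rwa [prod_map_map_eq, tendsto_map'_iff]
  have hψ' := hθ.mono_left (prod_mono hψ hψ)
  rwa [prod_map_map_eq, tendsto_map'_iff] at hψ'

lemma const_mul (h : CauchySeqWrt d u) {a : ℝ≥0∞} (ha : a ≠ ∞) :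
    CauchySeqWrt (fun x y => a * d x y) u := by
  simpa [CauchySeqWrt] using ENNReal.Tendsto.const_mul h (Or.inr ha)

lemma exists_forall_lt (h : CauchySeqWrt d u) {ε : ℝ≥0∞} (hε : 0 < ε) :
    ∃ J, ∀ j₁, J ≤ j₁ → ∀ j₂, J ≤ j₂ → d (u j₁) (u j₂) < ε := by
  have hev := h.eventually (gt_mem_nhds hε)
  rw [prod_atTop_atTop_eq] at hev
  exact eventually_atTop_prod_self'.1 hev

lemma tsum {ι : Type*} [Countable ι] {d : ι → X → X → ℝ≥0∞}
    (h : ∀ k, CauchySeqWrt (d k) u) (bound : ι → ℝ≥0∞) (h_fin : ∑' k, bound k ≠ ∞)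
    (h_bound : ∀ i j k, d k (u i) (u j) ≤ bound k) :
    CauchySeqWrt (fun x y => ∑' k, d k x y) u := by
  simpa only [CauchySeqWrt, tsum_zero] using
    ENNReal.tendsto_tsum_of_dominated_convergence bound h_fin h
    (.of_forall fun p => h_bound p.1 p.2)

end CauchySeqWrt

lemma cauchySeqWrt_qSeminorm_of_tendsto {φ : ℝ → ℝ} {n : ℕ} {u : ℕ → ℝ → ℂ} {v : ℝ → ℂ}
    (hu : ∀ j, ContDiff ℝ n (u j)) (hv : ContDiff ℝ n v)
    (h : Tendsto (fun j => qSeminorm φ n (u j - v)) atTop (𝓝 0)) :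
    CauchySeqWrt (fun f g => qSeminorm φ n (f - g)) u := by
  have hsum := (h.comp (tendsto_fst (g := atTop))).add (h.comp (tendsto_snd (f := atTop)))
  rw [add_zero] at hsum
  exact tendsto_of_tendsto_of_tendsto_of_le_of_le tendsto_const_nhds hsum (fun _ => zero_le)
    fun p => qSeminorm_sub_le_sub_add_sub (hu p.1) hv (hu p.2)

-- `map ψ atTop ≤ map θ atTop` says that from some index on, `ψ` is a subsequence of `θ`.
theorem exists_diagonal_subseq (P : ℕ → (ℕ → ℕ) → Prop)
    (hP : ∀ k (θ : ℕ → ℕ), StrictMono θ → ∃ σ : ℕ → ℕ, StrictMono σ ∧ P k (θ ∘ σ)) :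
    ∃ ψ : ℕ → ℕ, StrictMono ψ ∧ ∀ k, ∃ θ, P k θ ∧ map ψ atTop ≤ map θ atTop := by
  choose σ hσ hPσ using hP
  let Θ : ℕ → {θ : ℕ → ℕ // StrictMono θ} := fun k =>
    Nat.rec ⟨id, strictMono_id⟩ (fun k θ => ⟨θ.1 ∘ σ k θ.1 θ.2, θ.2.comp (hσ k θ.1 θ.2)⟩) k
  have hΘ_sub (k n i : ℕ) : ∃ i' ≥ i, (Θ (k + n)).1 i = (Θ k).1 i' := by
    induction n generalizing i with
    | zero => exact ⟨i, le_rfl, rfl⟩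
    | succ n ih =>
      obtain ⟨i', hi', hΘi⟩ := ih (σ (k + n) _ _ i)
      exact ⟨i', ((hσ _ _ _).le_apply).trans hi', hΘi⟩
  refine ⟨fun j => (Θ (j + 1)).1 j, strictMono_nat_of_lt_succ fun j => ?_, fun k => ?_⟩
  · calc (Θ (j + 1)).1 j < (Θ (j + 1)).1 (j + 1) := (Θ (j + 1)).2 j.lt_succ_self
      _ ≤ (Θ (j + 1 + 1)).1 (j + 1) := (Θ (j + 1)).2.monotone (hσ _ _ _).le_apply
  · refine ⟨(Θ (k + 1)).1, hPσ _ _ _, fun S hS => ?_⟩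
    obtain ⟨N, hN⟩ := mem_atTop_sets.1 (mem_map.1 hS)
    refine mem_map.2 (mem_atTop_sets.2 ⟨max N k, fun j hj => ?_⟩)
    obtain ⟨i', hi', hΘi⟩ := hΘ_sub (k + 1) (j - k) j
    rw [show k + 1 + (j - k) = j + 1 by omega] at hΘi
    show (Θ (j + 1)).1 j ∈ S
    exact hΘi ▸ hN i' ((le_max_left N k).trans (hj.trans hi'))

def IsCompactEmbedding (φ' : ℝ → ℝ) (n' : ℕ) (φ : ℝ → ℝ) (n : ℕ) : Prop :=
  ∀ u : ℕ → ℝ → ℂ, (∀ j, ContDiff ℝ n' (u j)) → (∀ j, qSeminorm φ' n' (u j) ≤ 1) →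
    ∃ ψ : ℕ → ℕ, StrictMono ψ ∧ ∃ v : ℝ → ℂ, ContDiff ℝ n v ∧ qSeminorm φ n v < ⊤ ∧
      Tendsto (fun j => qSeminorm φ n (u (ψ j) - v)) atTop (𝓝 0)

namespace IsCompactEmbedding

variable {φ φ' : ℝ → ℝ} {n n' : ℕ}

lemma exists_bound (h : IsCompactEmbedding φ' n' φ n) (hn : n ≤ n') :
    ∃ C ≠ ∞, ∀ u, ContDiff ℝ n' u → qSeminorm φ' n' u ≤ 1 → qSeminorm φ n u ≤ C := by
  by_contra! hC
  choose u hu hu1 hlt using fun j : ℕ => hC j (ENNReal.natCast_ne_top j)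
  obtain ⟨ψ, hψ, v, hv, hv_fin, hlim⟩ := h u hu hu1
  obtain ⟨N, hN⟩ :=
    ENNReal.exists_nat_gt (ENNReal.add_ne_top.2 ⟨ENNReal.one_ne_top, hv_fin.ne⟩)
  obtain ⟨j, hj1, hjN⟩ :=
    ((hlim.eventually_lt_const one_pos).and (eventually_ge_atTop N)).exists
  have hn' : (n : WithTop ℕ∞) ≤ n' := by exact_mod_cast hn
  refine lt_irrefl (N : ℝ≥0∞) ?_
  calc (N : ℝ≥0∞) ≤ ψ j := by exact_mod_cast hjN.trans hψ.le_apply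
    _ < qSeminorm φ n (u (ψ j)) := hlt (ψ j)
    _ ≤ qSeminorm φ n (u (ψ j) - v) + qSeminorm φ n v :=
        qSeminorm_le_sub_add ((hu (ψ j)).of_le hn') hv
    _ ≤ 1 + qSeminorm φ n v := by gcongr
    _ < N := hN

lemma exists_subseq_cauchySeqWrt (h : IsCompactEmbedding φ' n' φ n) (hn : n ≤ n')
    {u : ℕ → ℝ → ℂ} (hu : ∀ j, ContDiff ℝ n' (u j)) (hu1 : ∀ j, qSeminorm φ' n' (u j) ≤ 1) :
    ∃ σ : ℕ → ℕ, StrictMono σ ∧ CauchySeqWrt (fun f g => qSeminorm φ n (f - g)) (u ∘ σ) := by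
  obtain ⟨σ, hσ, v, hv, -, hlim⟩ := h u hu hu1
  have hn' : (n : WithTop ℕ∞) ≤ n' := by exact_mod_cast hn
  exact ⟨σ, hσ, cauchySeqWrt_qSeminorm_of_tendsto (fun j => (hu (σ j)).of_le hn') hv hlim⟩

theorem exists_subseq_cauchySeqWrt_tsum (h : IsCompactEmbedding φ' n' φ n) (hn : n ≤ n')
    {G : ℕ → ℕ → ℝ → ℂ} (hG : ∀ j k, ContDiff ℝ n' (G j k))
    (hG1 : ∀ j k, qSeminorm φ' n' (G j k) ≤ 1) {w : ℕ → ℝ≥0∞} (hw : ∑' k, w k ≠ ∞) :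
    ∃ ψ : ℕ → ℕ, StrictMono ψ ∧
      CauchySeqWrt (fun f g => ∑' k, w k * qSeminorm φ n (f k - g k)) (G ∘ ψ) := by
  obtain ⟨C, hC, hbound⟩ := h.exists_bound hn
  obtain ⟨ψ, hψ, hdiag⟩ := exists_diagonal_subseq
    (fun k θ => CauchySeqWrt (fun f g => qSeminorm φ n (f k - g k)) (G ∘ θ))
    fun k θ _ => by
      obtain ⟨σ, hσ, hσ_cauchy⟩ :=
        h.exists_subseq_cauchySeqWrt hn (fun j => hG (θ j) k) (fun j => hG1 (θ j) k)
      exact ⟨σ, hσ, hσ_cauchy⟩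
  have hn' : (n : WithTop ℕ∞) ≤ n' := by exact_mod_cast hn
  refine ⟨ψ, hψ, CauchySeqWrt.tsum (fun k => ?_) (fun k => w k * (2 * C)) ?_ fun i j k => ?_⟩
  · obtain ⟨θ, hθ, hψθ⟩ := hdiag k
    exact (hθ.comp_of_map_le hψθ).const_mul (ne_top_of_le_ne_top hw (ENNReal.le_tsum k))
  · rw [ENNReal.tsum_mul_right]
    exact ENNReal.mul_ne_top hw (ENNReal.mul_ne_top ENNReal.ofNat_ne_top hC)
  · gcongr
    calc qSeminorm φ n (G (ψ i) k - G (ψ j) k)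
        ≤ qSeminorm φ n (G (ψ i) k) + qSeminorm φ n (G (ψ j) k) :=
          qSeminorm_sub_le ((hG _ k).of_le hn') ((hG _ k).of_le hn')
      _ ≤ C + C := add_le_add (hbound _ (hG _ k) (hG1 _ k)) (hbound _ (hG _ k) (hG1 _ k))
      _ = 2 * C := (two_mul C).symm

end IsCompactEmbedding

theorem sequence_space_embedding_completely_continuous_general
    (φm φm1 : ℝ → ℝ) (m : ℕ)
    (hcompact : ∀ u : ℕ → ℝ → ℂ,
      (∀ j, ContDiff ℝ (m + 1) (u j)) →
      (∀ j, qSeminorm φm1 (m + 1) (u j) ≤ 1) →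
      ∃ ψ : ℕ → ℕ, StrictMono ψ ∧ ∃ v : ℝ → ℂ, ContDiff ℝ m v ∧
        qSeminorm φm m v < ⊤ ∧
        Tendsto (fun j => qSeminorm φm m (fun x => u (ψ j) x - v x)) atTop (nhds 0))
    (c c' : ℕ → ℝ) (hc : ∀ k, 0 < c k) (hc' : ∀ k, 0 < c' k)
    (hsum : Summable fun k => c k / c' k) :
    ∀ r : ℝ, 0 < r → ∀ F : ℕ → ℕ → ℝ → ℂ,
      (∀ j k, ContDiff ℝ (m + 1) (F j k)) →
      (∀ j, pNorm c' φm1 (m + 1) (F j) ≤ ENNReal.ofReal r) →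
      ∃ ψ : ℕ → ℕ, StrictMono ψ ∧
        ∀ ε : ENNReal, 0 < ε → ∃ J : ℕ, ∀ j₁, J ≤ j₁ → ∀ j₂, J ≤ j₂ →
          pNorm c φm m (fun k x => F (ψ j₁) k x - F (ψ j₂) k x) < ε := by
  intro r hr F hF hFr
  have hcomp : IsCompactEmbedding φm1 (m + 1) φm m := hcompact
  have ha : ∀ k, 0 < c' k / r := fun k => div_pos (hc' k) hr
  have hw : ∑' k, ENNReal.ofReal (c k / (c' k / r)) ≠ ∞ := by
    rw [← ENNReal.ofReal_tsum_of_nonneg (fun k => (div_pos (hc k) (ha k)).le)]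
    · exact ENNReal.ofReal_ne_top
    · simpa [div_div_eq_mul_div, mul_div_right_comm] using hsum.mul_right r
  obtain ⟨ψ, hψ, hcauchy⟩ := hcomp.exists_subseq_cauchySeqWrt_tsum m.le_succ
    (G := fun j k => (c' k / r) • F j k) (fun j k => (hF j k).const_smul (c' k / r))
    (fun j k => qSeminorm_smul_le_one_of_pNorm_le hr (hFr j) (hc' k).le) hw
  refine ⟨ψ, hψ, fun ε hε => ?_⟩
  show ∃ J, ∀ j₁, J ≤ j₁ → ∀ j₂, J ≤ j₂ → pNorm c φm m (F (ψ j₁) - F (ψ j₂)) < ε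
  simpa only [pNorm_eq_tsum_smul c _ ha, Pi.sub_apply, smul_sub, Function.comp_apply] using
    hcauchy.exists_forall_lt hε

/-- Suppose the unit ball of `q_{φ_{m+1},m+1}` (on `C^{m+1}` functions) is relatively
compact for `q_{φ_m,m}`; let `(c_k)`, `(c'_k)` be positive sequences with
`Σ c_k / c'_k < ∞`, and let `p_m`, `p_{m+1}` be the corresponding weighted sequence-space
norms. Then every sequence of elements of `T_{m+1}` lying in the ball of radius `r` of
`p_{m+1}` admits a subsequence that is Cauchy for `p_m`: the embedding `T_{m+1} → T_m`
is completely continuous. -/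
theorem sequence_space_embedding_completely_continuous
    (φm φm1 : ℝ → ℝ) (hφm : Continuous φm) (hφm1 : Continuous φm1) (m : ℕ)
    (hcompact : ∀ u : ℕ → ℝ → ℂ,
      (∀ j, ContDiff ℝ (m + 1) (u j)) →
      (∀ j, qSeminorm φm1 (m + 1) (u j) ≤ 1) →
      ∃ ψ : ℕ → ℕ, StrictMono ψ ∧ ∃ v : ℝ → ℂ, ContDiff ℝ m v ∧
        qSeminorm φm m v < ⊤ ∧
        Tendsto (fun j => qSeminorm φm m (fun x => u (ψ j) x - v x)) atTop (nhds 0))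
    (c c' : ℕ → ℝ) (hc : ∀ k, 0 < c k) (hc' : ∀ k, 0 < c' k)
    (hsum : Summable fun k => c k / c' k) :
    ∀ r : ℝ, 0 < r → ∀ F : ℕ → ℕ → ℝ → ℂ,
      (∀ j k, ContDiff ℝ (m + 1) (F j k)) →
      (∀ j, pNorm c' φm1 (m + 1) (F j) ≤ ENNReal.ofReal r) →
      ∃ ψ : ℕ → ℕ, StrictMono ψ ∧
        ∀ ε : ENNReal, 0 < ε → ∃ J : ℕ, ∀ j₁, J ≤ j₁ → ∀ j₂, J ≤ j₂ →
          pNorm c φm m (fun k x => F (ψ j₁) k x - F (ψ j₂) k x) < ε :=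
  sequence_space_embedding_completely_continuous_general φm φm1 m hcompact c c' hc hc' hsum
end
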